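/- arXiv:2203.15212 — 3 statements merged into one kernel-verified Lean document; each statement's English description precedes it below -/
import Mathlib

section
/- For every weight function ω supported on P, the L1 reconstruction error decomposes as RE_1(ω) = Σ_{{X,Y} ∈ P} ( E_{XY}·|1 − ω_{XY}/Π_{XY}| + (Π_{XY} − E_{XY})·|ω_{XY}/Π_{XY}| ) + Σ_{{X,Y} ∉ P} E_{XY}, where the last sum ranges over all unordered pairs of supernodes (including self-pairs) not in P. -/
/-!
Group the ordered pairs of distinct nodes by the superedge `z = {c i, c j}` they span. On the
fibre of `z` the reconstruction is the constant `a_z = w_z / Π_z` (or `0` when `z ∉ P`), and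
since `A` is `0/1`-valued, `|A_ij − a_z|` takes only the two values `|1 − a_z|` (on the `2 E_z`
pairs with `A_ij = 1`) and `|a_z|` (on the remaining `2 (Π_z − E_z)` pairs).
-/

open scoped Classical

/-- `PiCount c z` is the number `Π_z` of unordered pairs `{i, j}` of distinct
nodes with `{c i, c j} = z` (computed as half the number of ordered pairs). -/
noncomputable def PiCount {V S : Type*} [Fintype V] (c : V → S) (z : Sym2 S) : ℝ :=
  ((Finset.univ.offDiag.filter
      (fun p : V × V => s(c p.1, c p.2) = z)).card : ℝ) / 2

/-- `ECount A c z` is the number `E_z` of unordered pairs `{i, j}` of distinct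
nodes with `{c i, c j} = z` and `A i j = 1` (half the number of ordered pairs). -/
noncomputable def ECount {V S : Type*} [Fintype V] (A : V → V → ℝ) (c : V → S)
    (z : Sym2 S) : ℝ :=
  ((Finset.univ.offDiag.filter
      (fun p : V × V => s(c p.1, c p.2) = z ∧ A p.1 p.2 = 1)).card : ℝ) / 2

/-- The matrix reconstructed from the weighted summary graph `(P, w)`:
`A'_{ij} = w_{c i, c j} / Π_{c i, c j}` if `i ≠ j` and `{c i, c j} ∈ P`, else `0`. -/
noncomputable def reconW {V S : Type*} [Fintype V] (c : V → S) (P : Finset (Sym2 S))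
    (w : Sym2 S → ℝ) (i j : V) : ℝ :=
  if i ≠ j ∧ s(c i, c j) ∈ P then
    w (s(c i, c j)) / PiCount c (s(c i, c j)) else 0

/-- The `L1` reconstruction error of the weighted summary graph `(P, w)`:
the sum of `|A i j − A' i j|` over unordered pairs of distinct nodes
(computed as half the sum over ordered pairs). -/
noncomputable def RE1 {V S : Type*} [Fintype V] (A : V → V → ℝ) (c : V → S)
    (P : Finset (Sym2 S)) (w : Sym2 S → ℝ) : ℝ :=
  (∑ p ∈ Finset.univ.offDiag, |A p.1 p.2 - reconW c P w p.1 p.2|) / 2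

/-- The matrix reconstructed from the unweighted summary graph `P'`:
`Ǎ_{ij} = 1` if `i ≠ j` and `{c i, c j} ∈ P'`, else `0`. -/
noncomputable def reconU {V S : Type*} (c : V → S) (P' : Finset (Sym2 S))
    (i j : V) : ℝ :=
  if i ≠ j ∧ s(c i, c j) ∈ P' then 1 else 0

/-- The `L1` reconstruction error of the unweighted summary graph `P'`. -/
noncomputable def RE1U {V S : Type*} [Fintype V] (A : V → V → ℝ) (c : V → S)
    (P' : Finset (Sym2 S)) : ℝ :=
  (∑ p ∈ Finset.univ.offDiag, |A p.1 p.2 - reconU c P' p.1 p.2|) / 2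

open Finset

namespace Summarization

variable {V S : Type*} [Fintype V]

noncomputable def fiber (c : V → S) (z : Sym2 S) : Finset (V × V) :=
  univ.offDiag.filter fun p => s(c p.1, c p.2) = z

lemma sum_offDiag_eq_sum_sum_fiber {M : Type*} [AddCommMonoid M] [Fintype S] (c : V → S)
    (f : V × V → M) :
    ∑ p ∈ univ.offDiag, f p = ∑ z, ∑ p ∈ fiber c z, f p :=
  (sum_fiberwise _ _ _).symm

lemma card_fiber (c : V → S) (z : Sym2 S) :
    ((fiber c z).card : ℝ) = 2 * PiCount c z := by
  rw [PiCount, fiber]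
  ring

lemma card_fiber_filter_eq_one (A : V → V → ℝ) (c : V → S) (z : Sym2 S) :
    (((fiber c z).filter fun p => A p.1 p.2 = 1).card : ℝ) = 2 * ECount A c z := by
  rw [ECount, fiber, filter_filter]
  ring

lemma card_fiber_filter_ne_one (A : V → V → ℝ) (c : V → S) (z : Sym2 S) :
    (((fiber c z).filter fun p => A p.1 p.2 ≠ 1).card : ℝ)
      = 2 * PiCount c z - 2 * ECount A c z := by
  have hsplit := card_filter_add_card_filter_not (s := fiber c z) (p := fun p => A p.1 p.2 = 1)
  rw [← card_fiber_filter_eq_one, ← card_fiber, ← hsplit]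
  push_cast
  ring

lemma abs_sub_of_eq_zero_or_eq_one {x : ℝ} (hx : x = 0 ∨ x = 1) (a : ℝ) :
    |x - a| = if x = 1 then |1 - a| else |a| := by
  rcases hx with rfl | rfl <;> simp

lemma sum_fiber_abs_sub_const (A : V → V → ℝ) (h01 : ∀ i j, A i j = 0 ∨ A i j = 1)
    (c : V → S) (z : Sym2 S) (a : ℝ) :
    ∑ p ∈ fiber c z, |A p.1 p.2 - a|
      = 2 * (ECount A c z * |1 - a| + (PiCount c z - ECount A c z) * |a|) := by
  simp_rw [abs_sub_of_eq_zero_or_eq_one (h01 _ _) a]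
  rw [sum_ite, sum_const, sum_const, nsmul_eq_mul, nsmul_eq_mul,
    card_fiber_filter_eq_one, card_fiber_filter_ne_one]
  ring

noncomputable def reconValue (c : V → S) (P : Finset (Sym2 S)) (w : Sym2 S → ℝ)
    (z : Sym2 S) : ℝ :=
  if z ∈ P then w z / PiCount c z else 0

lemma reconW_of_mem_fiber {c : V → S} {z : Sym2 S} {p : V × V} (hp : p ∈ fiber c z)
    (P : Finset (Sym2 S)) (w : Sym2 S → ℝ) :
    reconW c P w p.1 p.2 = reconValue c P w z := by
  obtain ⟨hoff, rfl⟩ := mem_filter.mp hp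
  have hne : p.1 ≠ p.2 := (mem_offDiag.mp hoff).2.2
  simp [reconW, reconValue, hne]

lemma RE1_eq_sum_reconValue [Fintype S] (A : V → V → ℝ) (h01 : ∀ i j, A i j = 0 ∨ A i j = 1)
    (c : V → S) (P : Finset (Sym2 S)) (w : Sym2 S → ℝ) :
    RE1 A c P w = ∑ z, (ECount A c z * |1 - reconValue c P w z|
      + (PiCount c z - ECount A c z) * |reconValue c P w z|) := by
  have hfib : ∀ z, ∑ p ∈ fiber c z, |A p.1 p.2 - reconW c P w p.1 p.2|
      = ∑ p ∈ fiber c z, |A p.1 p.2 - reconValue c P w z| :=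
    fun z => sum_congr rfl fun p hp => by rw [reconW_of_mem_fiber hp]
  rw [RE1, sum_offDiag_eq_sum_sum_fiber c]
  simp_rw [hfib, sum_fiber_abs_sub_const A h01, ← mul_sum]
  ring

end Summarization

open Summarization in
theorem stmt_7_general {V S : Type*} [Fintype V] [Fintype S]
    (A : V → V → ℝ)
    (h01 : ∀ i j : V, A i j = 0 ∨ A i j = 1)
    (c : V → S)
    (P : Finset (Sym2 S))
    (w : Sym2 S → ℝ) :
    RE1 A c P w =
      (∑ z ∈ P, (ECount A c z * |1 - w z / PiCount c z|
          + (PiCount c z - ECount A c z) * |w z / PiCount c z|))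
        + ∑ z ∈ Finset.univ \ P, ECount A c z := by
  rw [RE1_eq_sum_reconValue A h01, ← sum_sdiff (subset_univ P), add_comm]
  congr 1
  · exact sum_congr rfl fun z hz => by simp [reconValue, hz]
  · exact sum_congr rfl fun z hz => by simp [reconValue, (mem_sdiff.mp hz).2]

/-- For every weight function `w` supported on the superedge set `P`, the `L1`
reconstruction error decomposes as
`RE₁(w) = Σ_{z ∈ P} (E_z·|1 − w_z/Π_z| + (Π_z − E_z)·|w_z/Π_z|) + Σ_{z ∉ P} E_z`,
the last sum ranging over all unordered pairs of supernodes (including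
self-pairs) not in `P`. -/
theorem stmt_7 {V S : Type*} [Fintype V] [Fintype S]
    (A : V → V → ℝ) (hSym : ∀ i j : V, A i j = A j i) (hDiag : ∀ i : V, A i i = 0)
    (h01 : ∀ i j : V, A i j = 0 ∨ A i j = 1)
    (c : V → S) (hc : Function.Surjective c)
    (P : Finset (Sym2 S)) (hP : ∀ z ∈ P, 1 ≤ PiCount c z)
    (w : Sym2 S → ℝ) :
    RE1 A c P w =
      (∑ z ∈ P, (ECount A c z * |1 - w z / PiCount c z|
          + (PiCount c z - ECount A c z) * |w z / PiCount c z|))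
        + ∑ z ∈ Finset.univ \ P, ECount A c z :=
  stmt_7_general A h01 c P w
end

section
/- For every superedge set P and every weight function ω supported on P, there exists a superedge set P' (with the same supernode partition) whose unweighted L1 reconstruction error satisfies RĚ_1(P') ≤ RE_1(ω); that is, with a fixed partition into supernodes, the unweighted summarization model can always achieve an L1 reconstruction error at most that of any weighted summary graph. -/
open scoped Classical

/-!
Fix a superedge `z`. Both reconstructions are constant on the pairs of nodes lying over `z`, and
there `A` takes only the values `0` and `1`. Among all constants `x`, the error
`∑ |A i j - x|` over such a block is minimised by the majority value of `A` on the block, so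
keeping exactly those superedges of `P` on which at least half of the pairs are edges does at
least as well as any weights `w`, block by block.
-/

open Finset

section Majority

variable {ι : Type*} (s : Finset ι) {f : ι → ℝ}

theorem sum_abs_sub_eq_of_zero_or_one (hf : ∀ i ∈ s, f i = 0 ∨ f i = 1) (x : ℝ) :
    ∑ i ∈ s, |f i - x| = #(s.filter (f · = 1)) * |1 - x| + #(s.filter (f · ≠ 1)) * |x| := by
  rw [← sum_filter_add_sum_filter_not s (f · = 1)]
  congr 1
  · rw [sum_congr rfl fun i hi => by rw [(mem_filter.mp hi).2], sum_const, nsmul_eq_mul]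
  · rw [sum_congr rfl fun i hi => ?_, sum_const, nsmul_eq_mul]
    obtain ⟨hi, hne⟩ := mem_filter.mp hi
    rw [(hf i hi).resolve_right hne, zero_sub, abs_neg]

theorem sum_abs_sub_majority_le (hf : ∀ i ∈ s, f i = 0 ∨ f i = 1) (x : ℝ) :
    ∑ i ∈ s, |f i - if #s ≤ 2 * #(s.filter (f · = 1)) then 1 else 0| ≤
      ∑ i ∈ s, |f i - x| := by
  have hcard : (#s : ℝ) = #(s.filter (f · = 1)) + #(s.filter (f · ≠ 1)) := by
    exact_mod_cast (card_filter_add_card_filter_not _).symm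
  have htri : 1 ≤ |1 - x| + |x| := by simpa using abs_add_le (1 - x) x
  have hx := abs_nonneg x
  have hx' := abs_nonneg (1 - x)
  rw [sum_abs_sub_eq_of_zero_or_one s hf, sum_abs_sub_eq_of_zero_or_one s hf]
  split_ifs with hmaj
  · have hle : (#(s.filter (f · ≠ 1)) : ℝ) ≤ #(s.filter (f · = 1)) := by
      have : (#s : ℝ) ≤ 2 * #(s.filter (f · = 1)) := by exact_mod_cast hmaj
      linarith
    simp only [sub_self, abs_zero, abs_one, mul_zero, mul_one, zero_add]
    nlinarith [mul_le_mul_of_nonneg_right hle hx']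
  · have hle : (#(s.filter (f · = 1)) : ℝ) ≤ #(s.filter (f · ≠ 1)) := by
      have : 2 * (#(s.filter (f · = 1)) : ℝ) < #s := by exact_mod_cast not_le.mp hmaj
      linarith
    simp only [sub_zero, abs_zero, abs_one, mul_zero, mul_one, add_zero]
    nlinarith [mul_le_mul_of_nonneg_right hle hx]

end Majority

section Fibers

variable {V S : Type*} [Fintype V] (c : V → S)

noncomputable def pairFiber (z : Sym2 S) : Finset (V × V) :=
  univ.offDiag.filter fun p => s(c p.1, c p.2) = z

theorem PiCount_eq_card_pairFiber (z : Sym2 S) : PiCount c z = #(pairFiber c z) / 2 := rfl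

theorem ECount_eq_card_pairFiber (A : V → V → ℝ) (z : Sym2 S) :
    ECount A c z = #((pairFiber c z).filter fun p => A p.1 p.2 = 1) / 2 := by
  rw [pairFiber, filter_filter, ECount]

theorem sum_offDiag_eq_sum_pairFiber (F : V × V → ℝ) :
    ∑ p ∈ univ.offDiag, F p =
      ∑ z ∈ univ.offDiag.image (fun p : V × V => s(c p.1, c p.2)),
        ∑ p ∈ pairFiber c z, F p :=
  (sum_fiberwise_of_maps_to (fun _ hp => mem_image_of_mem _ hp) F).symm

variable {c}

theorem reconU_of_mem_pairFiber (P' : Finset (Sym2 S)) {z : Sym2 S} {p : V × V}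
    (hp : p ∈ pairFiber c z) : reconU c P' p.1 p.2 = if z ∈ P' then 1 else 0 := by
  obtain ⟨hoff, rfl⟩ := mem_filter.mp hp
  simp [reconU, (mem_offDiag.mp hoff).2.2]

theorem reconW_of_mem_pairFiber (P : Finset (Sym2 S)) (w : Sym2 S → ℝ) {z : Sym2 S}
    {p : V × V} (hp : p ∈ pairFiber c z) :
    reconW c P w p.1 p.2 = if z ∈ P then w z / PiCount c z else 0 := by
  obtain ⟨hoff, rfl⟩ := mem_filter.mp hp
  simp [reconW, (mem_offDiag.mp hoff).2.2]

variable (c)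

noncomputable def majoritySuperedges (A : V → V → ℝ) (P : Finset (Sym2 S)) :
    Finset (Sym2 S) :=
  P.filter fun z => PiCount c z ≤ 2 * ECount A c z

theorem sum_pairFiber_abs_sub_majority_le {A : V → V → ℝ}
    (h01 : ∀ i j, A i j = 0 ∨ A i j = 1) (P : Finset (Sym2 S)) (z : Sym2 S) (x : ℝ) :
    ∑ p ∈ pairFiber c z, |A p.1 p.2 - if z ∈ majoritySuperedges c A P then 1 else 0| ≤
      ∑ p ∈ pairFiber c z, |A p.1 p.2 - if z ∈ P then x else 0| := by
  by_cases hz : z ∈ P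
  · have hmaj : PiCount c z ≤ 2 * ECount A c z ↔
        #(pairFiber c z) ≤ 2 * #((pairFiber c z).filter fun p => A p.1 p.2 = 1) := by
      rw [PiCount_eq_card_pairFiber, ECount_eq_card_pairFiber, div_le_iff₀ two_pos,
        mul_div_cancel₀ _ two_ne_zero, mul_comm]
      norm_cast
    simp only [majoritySuperedges, mem_filter, hz, true_and, if_true, hmaj]
    exact sum_abs_sub_majority_le (f := fun p : V × V => A p.1 p.2) _
      (fun p _ => h01 p.1 p.2) x
  · simp [majoritySuperedges, hz]

end Fibers

theorem stmt_12_general {V S : Type*} [Fintype V]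
    (A : V → V → ℝ)
    (h01 : ∀ i j : V, A i j = 0 ∨ A i j = 1)
    (c : V → S)
    (P : Finset (Sym2 S)) (hP : ∀ z ∈ P, 1 ≤ PiCount c z)
    (w : Sym2 S → ℝ) :
    ∃ P' : Finset (Sym2 S), (∀ z ∈ P', 1 ≤ PiCount c z) ∧
      RE1U A c P' ≤ RE1 A c P w := by
  refine ⟨majoritySuperedges c A P, fun z hz => hP z (mem_filter.mp hz).1, ?_⟩
  unfold RE1U RE1
  gcongr ?_ / 2
  rw [sum_offDiag_eq_sum_pairFiber c, sum_offDiag_eq_sum_pairFiber c]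
  refine sum_le_sum fun z _ => ?_
  calc _ = _ := sum_congr rfl fun p hp => by rw [reconU_of_mem_pairFiber _ hp]
    _ ≤ _ := sum_pairFiber_abs_sub_majority_le c h01 P z (w z / PiCount c z)
    _ = _ := sum_congr rfl fun p hp => by rw [reconW_of_mem_pairFiber _ _ hp]

/-- For every superedge set `P` and weight function `w` supported on `P`, there
is a superedge set `P'` (with the same supernode partition) whose unweighted
`L1` reconstruction error satisfies `RĚ₁(P') ≤ RE₁(w)`. -/
theorem stmt_12 {V S : Type*} [Fintype V] [Fintype S]
    (A : V → V → ℝ) (hSym : ∀ i j : V, A i j = A j i) (hDiag : ∀ i : V, A i i = 0)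
    (h01 : ∀ i j : V, A i j = 0 ∨ A i j = 1)
    (c : V → S) (hc : Function.Surjective c)
    (P : Finset (Sym2 S)) (hP : ∀ z ∈ P, 1 ≤ PiCount c z)
    (w : Sym2 S → ℝ) :
    ∃ P' : Finset (Sym2 S), (∀ z ∈ P', 1 ≤ PiCount c z) ∧
      RE1U A c P' ≤ RE1 A c P w :=
  stmt_12_general A h01 c P hP w
end

section
/- The minimum of RE_1(ω) over all pairs (P, ω) of a superedge set P and a weight function ω supported on P equals the minimum of RĚ_1(P') over all superedge sets P', and both minima equal Σ_{{X,Y}} min(E_{XY}, Π_{XY} − E_{XY}), where the sum ranges over all unordered pairs of supernodes (including self-pairs) with Π_{XY} ≥ 1. -/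
open scoped Classical

/-! Both reconstructions are constant, say equal to `t`, on the node pairs lying over a fixed
supernode pair `z`. For a `0/1` matrix the error there is `E_z |1 - t| + (Π_z - E_z) |t|`, which is
at least `min (E_z, Π_z - E_z)` because `1 ≤ |1 - t| + |t|`; the bound is attained at `t = 1` if
`Π_z - E_z ≤ E_z` and at `t = 0` otherwise. Both choices are unweighted (weight `Π_z`, resp. no
superedge), so the two optima coincide. A supernode pair with `Π_z < 1` carries no node pairs,
since ordered node pairs over `z` come with their swaps, and so contributes nothing. -/

lemma sum_abs_sub_eq_of_zero_or_one_s13 {ι : Type*} (s : Finset ι) (a : ι → ℝ)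
    (h01 : ∀ i ∈ s, a i = 0 ∨ a i = 1) (t : ℝ) :
    ∑ i ∈ s, |a i - t| =
      (s.filter (a · = 1)).card * |1 - t| + ((s.card : ℝ) - (s.filter (a · = 1)).card) * |t| := by
  have hcard := Finset.card_filter_add_card_filter_not (s := s) (a · = 1)
  have hone : ∀ i ∈ s.filter (a · = 1), |a i - t| = |1 - t| := fun i hi => by
    rw [(Finset.mem_filter.mp hi).2]
  have hzero : ∀ i ∈ s.filter (¬ a · = 1), |a i - t| = |t| := fun i hi => by
    obtain ⟨his, hi1⟩ := Finset.mem_filter.mp hi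
    rw [(h01 i his).resolve_right hi1, zero_sub, abs_neg]
  rw [← Finset.sum_filter_add_sum_filter_not s (a · = 1), Finset.sum_congr rfl hone,
    Finset.sum_congr rfl hzero, Finset.sum_const, Finset.sum_const, nsmul_eq_mul, nsmul_eq_mul,
    ← hcard]
  push_cast
  ring

lemma min_le_mul_abs_one_sub_add_mul_abs {e f : ℝ} (he : 0 ≤ e) (hf : 0 ≤ f) (t : ℝ) :
    min e f ≤ e * |1 - t| + f * |t| :=
  calc min e f ≤ min e f * (|1 - t| + |t|) :=
        le_mul_of_one_le_right (le_min he hf) (by simpa using abs_add_le (1 - t) t)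
    _ ≤ e * |1 - t| + f * |t| := by
        rw [mul_add]
        gcongr
        exacts [min_le_left e f, min_le_right e f]

section Summary

variable {V S : Type*} [Fintype V] (A : V → V → ℝ) (c : V → S)

noncomputable def superFiber (z : Sym2 S) : Finset (V × V) :=
  Finset.univ.offDiag.filter (fun p : V × V => s(c p.1, c p.2) = z)

/-- The reconstruction error on the pairs over `z` when they are all reconstructed as `t`. -/
noncomputable def fiberCost (z : Sym2 S) (t : ℝ) : ℝ :=
  ECount A c z * |1 - t| + (PiCount c z - ECount A c z) * |t|

lemma PiCount_eq_card_superFiber (z : Sym2 S) : PiCount c z = (superFiber c z).card / 2 := rfl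

lemma ECount_eq_card_filter_superFiber (z : Sym2 S) :
    ECount A c z = ((superFiber c z).filter (fun p => A p.1 p.2 = 1)).card / 2 := by
  rw [ECount, superFiber, Finset.filter_filter]

lemma ECount_nonneg (z : Sym2 S) : 0 ≤ ECount A c z := by
  rw [ECount]
  positivity

lemma ECount_le_PiCount (z : Sym2 S) : ECount A c z ≤ PiCount c z := by
  rw [ECount_eq_card_filter_superFiber, PiCount_eq_card_superFiber]
  gcongr
  exact Finset.filter_subset _ _

lemma one_le_PiCount_of_mem_superFiber {z : Sym2 S} {p : V × V} (hp : p ∈ superFiber c z) :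
    1 ≤ PiCount c z := by
  obtain ⟨hne, hpz⟩ : p.1 ≠ p.2 ∧ s(c p.1, c p.2) = z := by simpa [superFiber] using hp
  have hswap : p.swap ∈ superFiber c z := by
    simpa [superFiber, Sym2.eq_swap, hne.symm] using hpz
  have htwo : 1 < (superFiber c z).card :=
    Finset.one_lt_card.mpr ⟨p, hp, p.swap, hswap, fun h => hne (congrArg Prod.fst h)⟩
  rw [PiCount_eq_card_superFiber, le_div_iff₀ two_pos, one_mul]
  exact_mod_cast htwo

lemma ECount_eq_zero_of_PiCount_lt_one {z : Sym2 S} (hz : PiCount c z < 1) :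
    ECount A c z = 0 := by
  have hempty : (superFiber c z).filter (fun p => A p.1 p.2 = 1) = ∅ :=
    Finset.filter_eq_empty_iff.mpr fun _ hp _ =>
      (one_le_PiCount_of_mem_superFiber c hp).not_gt hz
  rw [ECount_eq_card_filter_superFiber, hempty, Finset.card_empty, Nat.cast_zero, zero_div]

lemma fiberCost_nonneg (z : Sym2 S) (t : ℝ) : 0 ≤ fiberCost A c z t :=
  add_nonneg (mul_nonneg (ECount_nonneg A c z) (abs_nonneg _))
    (mul_nonneg (sub_nonneg.mpr (ECount_le_PiCount A c z)) (abs_nonneg _))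

lemma min_le_fiberCost (z : Sym2 S) (t : ℝ) :
    min (ECount A c z) (PiCount c z - ECount A c z) ≤ fiberCost A c z t :=
  min_le_mul_abs_one_sub_add_mul_abs (ECount_nonneg A c z)
    (sub_nonneg.mpr (ECount_le_PiCount A c z)) t

lemma sum_superFiber_abs_sub (h01 : ∀ i j, A i j = 0 ∨ A i j = 1) (z : Sym2 S) (t : ℝ) :
    ∑ p ∈ superFiber c z, |A p.1 p.2 - t| = 2 * fiberCost A c z t := by
  rw [sum_abs_sub_eq_of_zero_or_one_s13 _ (fun p : V × V => A p.1 p.2) (fun p _ => h01 p.1 p.2),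
    fiberCost, ECount_eq_card_filter_superFiber, PiCount_eq_card_superFiber]
  ring

lemma sum_offDiag_abs_sub_div_two [Fintype S] (h01 : ∀ i j, A i j = 0 ∨ A i j = 1)
    (B : V → V → ℝ) (t : Sym2 S → ℝ) (hB : ∀ i j, i ≠ j → B i j = t s(c i, c j)) :
    (∑ p ∈ Finset.univ.offDiag, |A p.1 p.2 - B p.1 p.2|) / 2 = ∑ z, fiberCost A c z (t z) := by
  rw [← Finset.sum_fiberwise Finset.univ.offDiag (fun p : V × V => s(c p.1, c p.2)),
    Finset.sum_div]
  refine Finset.sum_congr rfl fun z _ => ?_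
  have hBz : ∀ p ∈ superFiber c z, |A p.1 p.2 - B p.1 p.2| = |A p.1 p.2 - t z| := by
    intro p hp
    simp only [superFiber, Finset.mem_filter, Finset.mem_offDiag] at hp
    rw [hB _ _ hp.1.2.2, hp.2]
  rw [← superFiber, Finset.sum_congr rfl hBz, sum_superFiber_abs_sub A c h01]
  ring

lemma RE1_eq_sum_fiberCost [Fintype S] (h01 : ∀ i j, A i j = 0 ∨ A i j = 1)
    (P : Finset (Sym2 S)) (w : Sym2 S → ℝ) :
    RE1 A c P w = ∑ z, fiberCost A c z (if z ∈ P then w z / PiCount c z else 0) :=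
  sum_offDiag_abs_sub_div_two A c h01 _ _ fun i j hij => by simp [reconW, hij]

lemma RE1U_eq_sum_fiberCost [Fintype S] (h01 : ∀ i j, A i j = 0 ∨ A i j = 1)
    (P : Finset (Sym2 S)) :
    RE1U A c P = ∑ z, fiberCost A c z (if z ∈ P then 1 else 0) :=
  sum_offDiag_abs_sub_div_two A c h01 _ _ fun i j hij => by simp [reconU, hij]

lemma RE1_PiCount_eq_RE1U {P : Finset (Sym2 S)} (hP : ∀ z ∈ P, 1 ≤ PiCount c z) :
    RE1 A c P (PiCount c) = RE1U A c P := by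
  have hrecon : ∀ i j, reconW c P (PiCount c) i j = reconU c P i j := by
    intro i j
    unfold reconW reconU
    split_ifs with h
    · exact div_self (one_pos.trans_le (hP _ h.2)).ne'
    · rfl
  simp only [RE1, RE1U, hrecon]

noncomputable def minRE1 [Fintype S] : ℝ :=
  ∑ z ∈ Finset.univ.filter (fun z : Sym2 S => 1 ≤ PiCount c z),
    min (ECount A c z) (PiCount c z - ECount A c z)

noncomputable def optimalSuperedges [Fintype S] : Finset (Sym2 S) :=
  Finset.univ.filter fun z => 1 ≤ PiCount c z ∧ PiCount c z - ECount A c z ≤ ECount A c z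

lemma one_le_PiCount_of_mem_optimalSuperedges [Fintype S] {z : Sym2 S}
    (hz : z ∈ optimalSuperedges A c) : 1 ≤ PiCount c z :=
  (Finset.mem_filter.mp hz).2.1

lemma minRE1_le_sum_fiberCost [Fintype S] (t : Sym2 S → ℝ) :
    minRE1 A c ≤ ∑ z, fiberCost A c z (t z) :=
  calc _ ≤ ∑ z ∈ Finset.univ.filter (fun z : Sym2 S => 1 ≤ PiCount c z), fiberCost A c z (t z) :=
        Finset.sum_le_sum fun z _ => min_le_fiberCost A c z (t z)
    _ ≤ ∑ z, fiberCost A c z (t z) :=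
        Finset.sum_le_sum_of_subset_of_nonneg (Finset.filter_subset _ _)
          fun z _ _ => fiberCost_nonneg A c z (t z)

lemma sum_fiberCost_optimalSuperedges [Fintype S] :
    ∑ z, fiberCost A c z (if z ∈ optimalSuperedges A c then 1 else 0) = minRE1 A c := by
  rw [minRE1, Finset.sum_filter]
  refine Finset.sum_congr rfl fun z _ => ?_
  simp only [optimalSuperedges, Finset.mem_filter, Finset.mem_univ, true_and]
  by_cases hz : 1 ≤ PiCount c z
  · by_cases hle : PiCount c z - ECount A c z ≤ ECount A c z
    · simp [fiberCost, hz, hle]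
    · simp [fiberCost, hz, hle, min_eq_left (not_le.mp hle).le]
  · simp [fiberCost, hz, ECount_eq_zero_of_PiCount_lt_one A c (not_le.mp hz)]

end Summary

theorem stmt_13_general {V S : Type*} [Fintype V] [Fintype S]
    (A : V → V → ℝ)
    (h01 : ∀ i j : V, A i j = 0 ∨ A i j = 1)
    (c : V → S) :
    IsLeast {r : ℝ | ∃ (P : Finset (Sym2 S)) (w : Sym2 S → ℝ),
        (∀ z ∈ P, 1 ≤ PiCount c z) ∧ RE1 A c P w = r}
      (∑ z ∈ Finset.univ.filter (fun z : Sym2 S => 1 ≤ PiCount c z),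
        min (ECount A c z) (PiCount c z - ECount A c z)) ∧
    IsLeast {r : ℝ | ∃ P' : Finset (Sym2 S),
        (∀ z ∈ P', 1 ≤ PiCount c z) ∧ RE1U A c P' = r}
      (∑ z ∈ Finset.univ.filter (fun z : Sym2 S => 1 ≤ PiCount c z),
        min (ECount A c z) (PiCount c z - ECount A c z)) := by
  change IsLeast _ (minRE1 A c) ∧ IsLeast _ (minRE1 A c)
  have hvalid := fun z => one_le_PiCount_of_mem_optimalSuperedges A c (z := z)
  have hoptimal : RE1U A c (optimalSuperedges A c) = minRE1 A c := by
    rw [RE1U_eq_sum_fiberCost A c h01, sum_fiberCost_optimalSuperedges]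
  have hlower : ∀ P w, minRE1 A c ≤ RE1 A c P w := fun P w => by
    rw [RE1_eq_sum_fiberCost A c h01]
    exact minRE1_le_sum_fiberCost A c _
  refine ⟨⟨⟨optimalSuperedges A c, PiCount c, hvalid, ?_⟩, ?_⟩,
    ⟨⟨optimalSuperedges A c, hvalid, hoptimal⟩, ?_⟩⟩
  · rw [RE1_PiCount_eq_RE1U A c hvalid, hoptimal]
  · rintro r ⟨P, w, -, rfl⟩
    exact hlower P w
  · rintro r ⟨P', hP', rfl⟩
    rw [← RE1_PiCount_eq_RE1U A c hP']
    exact hlower P' _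

/-- The minimum of `RE₁(w)` over all pairs `(P, w)` of a superedge set and a
weight function supported on it equals the minimum of `RĚ₁(P')` over all
superedge sets `P'`, and both equal `Σ_z min (E_z, Π_z − E_z)`, the sum ranging
over all unordered pairs of supernodes (including self-pairs) with `Π_z ≥ 1`. -/
theorem stmt_13 {V S : Type*} [Fintype V] [Fintype S]
    (A : V → V → ℝ) (hSym : ∀ i j : V, A i j = A j i) (hDiag : ∀ i : V, A i i = 0)
    (h01 : ∀ i j : V, A i j = 0 ∨ A i j = 1)
    (c : V → S) (hc : Function.Surjective c) :
    IsLeast {r : ℝ | ∃ (P : Finset (Sym2 S)) (w : Sym2 S → ℝ),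
        (∀ z ∈ P, 1 ≤ PiCount c z) ∧ RE1 A c P w = r}
      (∑ z ∈ Finset.univ.filter (fun z : Sym2 S => 1 ≤ PiCount c z),
        min (ECount A c z) (PiCount c z - ECount A c z)) ∧
    IsLeast {r : ℝ | ∃ P' : Finset (Sym2 S),
        (∀ z ∈ P', 1 ≤ PiCount c z) ∧ RE1U A c P' = r}
      (∑ z ∈ Finset.univ.filter (fun z : Sym2 S => 1 ≤ PiCount c z),
        min (ECount A c z) (PiCount c z - ECount A c z)) :=
  stmt_13_general A h01 c
end
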